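/- arXiv:1401.7092 — 5 statements merged into one kernel-verified Lean document; each statement's English description precedes it below -/
import Mathlib

section
/- For integers m ≥ 1 and 1 ≤ n ≤ k, the set SAT_{Q^m}(Z^m, k, n) of systems of n equations in k variables over Z^m that are solvable in Q^m is generic: its asymptotic density with respect to the ball stratification of Z^{n(k+m)} equals 1. -/
/-!
If the first `n` columns of `A` form a nonsingular minor, then `AX = B` is solvable over `ℚ`
for every `B`. The determinant of that minor is a nonzero polynomial of total degree `n` in the
entries of `A`, so by the Schwartz–Zippel lemma it vanishes on at most a proportion
`n / (2r + 1)` of the box `[-r, r]^{n×k}`. Hence at least a proportion `1 - n / (2r + 1)` of the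
systems in the box of radius `r` are solvable.
-/

open Filter Finset Topology

namespace MvPolynomial

theorem schwartz_zippel_totalDegree_of_fintype {σ R : Type*} [Fintype σ] [DecidableEq σ]
    [CommRing R] [IsDomain R] [DecidableEq R] {p : MvPolynomial σ R} (hp : p ≠ 0) (S : Finset R) :
    (#{x ∈ Fintype.piFinset fun _ : σ ↦ S | eval x p = 0} : ℚ≥0) / (#S ^ Fintype.card σ)
      ≤ p.totalDegree / #S := by
  set e := Fintype.equivFin σ
  have hcard : #{x ∈ Fintype.piFinset fun _ : σ ↦ S | eval x p = 0}
      = #{y ∈ Fintype.piFinset fun _ ↦ S | eval y (rename e p) = 0} := by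
    refine card_nbij' (· ∘ e.symm) (· ∘ e) ?_ ?_ ?_ ?_ <;>
      intro x <;> simp +contextual [eval_rename, Function.comp_assoc]
  calc _ ≤ ((rename e p).totalDegree : ℚ≥0) / #S := by
        rw [hcard]; exact schwartz_zippel_totalDegree ((rename_injective _ e.injective).ne hp) S
    _ ≤ p.totalDegree / #S := by gcongr; exact totalDegree_rename_le _ _

end MvPolynomial

namespace Matrix

theorem exists_mul_eq_of_isUnit_det_submatrix {ι κ μ R : Type*} [Fintype ι] [DecidableEq ι]
    [Fintype κ] [DecidableEq κ] [CommRing R] {A : Matrix ι κ R} {e : ι → κ}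
    (h : IsUnit (A.submatrix id e).det) (B : Matrix ι μ R) : ∃ X : Matrix κ μ R, A * X = B := by
  refine ⟨((1 : Matrix κ κ R).submatrix (Equiv.refl κ) e : Matrix κ ι R) *
    ((A.submatrix id e)⁻¹ * B : Matrix ι μ R), ?_⟩
  rw [← Matrix.mul_assoc, mul_submatrix_one, ← Matrix.mul_assoc, Equiv.refl_symm,
    Equiv.coe_refl, Function.id_comp, mul_nonsing_inv _ h, Matrix.one_mul]

theorem totalDegree_det_mvPolynomialX_le (ι R : Type*) [Fintype ι] [DecidableEq ι] [CommRing R]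
    [Nontrivial R] : (det (mvPolynomialX ι ι R)).totalDegree ≤ Fintype.card ι := by
  rw [det_apply]
  refine MvPolynomial.totalDegree_finsetSum_le fun σ _ ↦
    (MvPolynomial.totalDegree_smul_le _ _).trans ?_
  refine (MvPolynomial.totalDegree_finsetProd _ _).trans ?_
  simp

section Box

variable {ι κ : Type*} [Fintype ι] [DecidableEq ι] [Fintype κ] [DecidableEq κ]

variable (ι κ) in
noncomputable def integerBox (r : ℕ) : Finset (Matrix ι κ ℤ) :=
  (Fintype.piFinset fun _ : ι × κ ↦ Icc (-r : ℤ) r).map ((Equiv.curry ι κ ℤ).trans of).toEmbedding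

theorem mem_integerBox {r : ℕ} {A : Matrix ι κ ℤ} :
    A ∈ integerBox ι κ r ↔ ∀ i j, |A i j| ≤ r := by
  rw [integerBox, mem_map_equiv]
  simp [abs_le]

theorem card_integerBox (r : ℕ) :
    #(integerBox ι κ r) = (2 * r + 1) ^ (Fintype.card ι * Fintype.card κ) := by
  simp only [integerBox, card_map, Fintype.card_piFinset, Int.card_Icc, prod_const, card_univ,
    Fintype.card_prod]
  congr 1
  omega

theorem card_integerBox_filter_det_submatrix_eq_zero_mul_le {e : ι → κ}
    (he : Function.Injective e) (r : ℕ) :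
    #{A ∈ integerBox ι κ r | (A.submatrix id e).det = 0} * (2 * r + 1)
      ≤ Fintype.card ι * (2 * r + 1) ^ (Fintype.card ι * Fintype.card κ) := by
  set P := MvPolynomial.rename (Prod.map id e) (det (mvPolynomialX ι ι ℤ))
  have hP : P ≠ 0 := (MvPolynomial.rename_injective _ (Function.injective_id.prodMap he)).ne
    (det_mvPolynomialX_ne_zero ι ℤ)
  have hdeg : P.totalDegree ≤ Fintype.card ι :=
    (MvPolynomial.totalDegree_rename_le _ _).trans (totalDegree_det_mvPolynomialX_le ι ℤ)
  have hcard : #{A ∈ integerBox ι κ r | (A.submatrix id e).det = 0}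
      = #{x ∈ Fintype.piFinset fun _ : ι × κ ↦ Icc (-r : ℤ) r | MvPolynomial.eval x P = 0} := by
    rw [integerBox, filter_map, card_map]
    congr 1
    refine filter_congr fun x _ ↦ ?_
    rw [MvPolynomial.eval_rename, eval_det_mvPolynomialX]
    rfl
  have hbox : #(Icc (-r : ℤ) r) = 2 * r + 1 := by simp only [Int.card_Icc]; omega
  have hSZ := MvPolynomial.schwartz_zippel_totalDegree_of_fintype hP (Icc (-r : ℤ) r)
  rw [← hcard, hbox, Fintype.card_prod, div_le_div_iff₀ (by positivity) (by positivity)] at hSZ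
  have hdeg' : (P.totalDegree : ℚ≥0) ≤ Fintype.card ι := by exact_mod_cast hdeg
  exact_mod_cast hSZ.trans (mul_le_mul_of_nonneg_right hdeg' zero_le)

theorem exists_map_mul_eq_of_det_submatrix_ne_zero {μ : Type*} {A : Matrix ι κ ℤ} {e : ι → κ}
    (h : (A.submatrix id e).det ≠ 0) (B : Matrix ι μ ℤ) :
    ∃ X : Matrix κ μ ℚ, A.map (↑) * X = B.map (↑) := by
  refine exists_mul_eq_of_isUnit_det_submatrix (e := e) (isUnit_iff_ne_zero.mpr ?_) _
  rw [submatrix_map, ← Int.cast_det]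
  exact_mod_cast h

variable {μ : Type*} [Fintype μ] [DecidableEq μ]

open scoped Classical in
variable (ι κ μ) in
/-- `SAT_{ℚ^μ}(ℤ^μ, κ, ι) ∩ B_r` in the notation of the paper. -/
noncomputable def solvableSystems (r : ℕ) : Finset (Matrix ι κ ℤ × Matrix ι μ ℤ) :=
  {p ∈ integerBox ι κ r ×ˢ integerBox ι μ r |
    ∃ X : Matrix κ μ ℚ, p.1.map ((↑) : ℤ → ℚ) * X = p.2.map ((↑) : ℤ → ℚ)}

theorem solvableSystems_subset (r : ℕ) :
    solvableSystems ι κ μ r ⊆ integerBox ι κ r ×ˢ integerBox ι μ r := by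
  classical exact filter_subset _ _

theorem card_integerBox_product (r : ℕ) : #(integerBox ι κ r ×ˢ integerBox ι μ r) =
    (2 * r + 1) ^ (Fintype.card ι * (Fintype.card κ + Fintype.card μ)) := by
  rw [card_product, card_integerBox, card_integerBox, ← pow_add, ← Nat.mul_add]

theorem card_solvableSystems_le (r : ℕ) :
    #(solvableSystems ι κ μ r) ≤
      (2 * r + 1) ^ (Fintype.card ι * (Fintype.card κ + Fintype.card μ)) :=
  (card_le_card (solvableSystems_subset r)).trans_eq (card_integerBox_product r)

theorem card_sdiff_solvableSystems_le {e : ι → κ} (he : Function.Injective e) (r : ℕ) :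
    #((integerBox ι κ r ×ˢ integerBox ι μ r) \ solvableSystems ι κ μ r) * (2 * r + 1) ≤
      Fintype.card ι * (2 * r + 1) ^ (Fintype.card ι * (Fintype.card κ + Fintype.card μ)) := by
  have hsub : (integerBox ι κ r ×ˢ integerBox ι μ r) \ solvableSystems ι κ μ r ⊆
      {A ∈ integerBox ι κ r | (A.submatrix id e).det = 0} ×ˢ integerBox ι μ r := by
    intro p hp
    rw [Finset.mem_sdiff] at hp
    simp only [solvableSystems, mem_filter, mem_product, not_and] at hp ⊢
    exact ⟨⟨hp.1.1, not_not.mp fun h ↦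
      hp.2 hp.1 (exists_map_mul_eq_of_det_submatrix_ne_zero h _)⟩, hp.1.2⟩
  calc _ ≤ #({A ∈ integerBox ι κ r | (A.submatrix id e).det = 0} ×ˢ integerBox ι μ r) *
        (2 * r + 1) := by gcongr
    _ = #{A ∈ integerBox ι κ r | (A.submatrix id e).det = 0} * (2 * r + 1) *
        (2 * r + 1) ^ (Fintype.card ι * Fintype.card μ) := by
      rw [card_product, card_integerBox, mul_right_comm]
    _ ≤ Fintype.card ι * (2 * r + 1) ^ (Fintype.card ι * Fintype.card κ) *
        (2 * r + 1) ^ (Fintype.card ι * Fintype.card μ) := by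
      gcongr ?_ * _
      exact card_integerBox_filter_det_submatrix_eq_zero_mul_le he r
    _ = _ := by rw [mul_assoc, ← pow_add, ← Nat.mul_add]

theorem one_sub_div_le_card_solvableSystems_div {e : ι → κ} (he : Function.Injective e) (r : ℕ) :
    1 - (Fintype.card ι : ℝ) / (2 * r + 1) ≤ #(solvableSystems ι κ μ r) /
      (2 * r + 1) ^ (Fintype.card ι * (Fintype.card κ + Fintype.card μ)) := by
  have hsplit :=
    card_sdiff_add_card_eq_card (solvableSystems_subset (ι := ι) (κ := κ) (μ := μ) r)
  rw [card_integerBox_product] at hsplit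
  have hbad := card_sdiff_solvableSystems_le (μ := μ) he r
  set D := Fintype.card ι * (Fintype.card κ + Fintype.card μ)
  set bad := (integerBox ι κ r ×ˢ integerBox ι μ r) \ solvableSystems ι κ μ r
  have hsplit' : (#bad : ℝ) + #(solvableSystems ι κ μ r) = (2 * r + 1) ^ D := by
    exact_mod_cast hsplit
  have hbad' : (#bad : ℝ) * (2 * r + 1) ≤ Fintype.card ι * (2 * r + 1) ^ D := by
    exact_mod_cast hbad
  rw [sub_le_iff_le_add, div_add_div _ _ (by positivity) (by positivity),
    le_div_iff₀ (by positivity)]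
  have hexpand : (2 * r + 1 : ℝ) * (2 * r + 1) ^ D =
      (2 * r + 1) * #(solvableSystems ι κ μ r) + #bad * (2 * r + 1) := by
    rw [← hsplit']; ring
  linarith

theorem tendsto_card_solvableSystems_div {e : ι → κ} (he : Function.Injective e) :
    Tendsto (fun r : ℕ ↦ (#(solvableSystems ι κ μ r) : ℝ) /
      (2 * r + 1) ^ (Fintype.card ι * (Fintype.card κ + Fintype.card μ))) atTop (𝓝 1) := by
  have hlower : Tendsto (fun r : ℕ ↦ 1 - (Fintype.card ι : ℝ) / (2 * r + 1)) atTop (𝓝 1) := by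
    have hN : Tendsto (fun r : ℕ ↦ 2 * (r : ℝ) + 1) atTop atTop :=
      tendsto_atTop_add_const_right _ 1 (tendsto_natCast_atTop_atTop.const_mul_atTop two_pos)
    simpa using tendsto_const_nhds.sub (tendsto_const_nhds.div_atTop hN)
  refine tendsto_of_tendsto_of_tendsto_of_le_of_le hlower tendsto_const_nhds
    (one_sub_div_le_card_solvableSystems_div he) fun r ↦ ?_
  rw [div_le_one (by positivity)]
  beta_reduce
  exact_mod_cast card_solvableSystems_le r

end Box

end Matrix

theorem satQ_generic_of_le_general (m n k : ℕ) (hnk : n ≤ k) :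
    Tendsto (fun r : ℕ =>
      ((Set.ncard {p : Matrix (Fin n) (Fin k) ℤ × Matrix (Fin n) (Fin m) ℤ |
          (∃ X : Matrix (Fin k) (Fin m) ℚ,
            p.1.map ((↑) : ℤ → ℚ) * X = p.2.map ((↑) : ℤ → ℚ)) ∧
          (∀ i j, |p.1 i j| ≤ (r : ℤ)) ∧ (∀ i j, |p.2 i j| ≤ (r : ℤ))} : ℝ) /
        (2 * (r : ℝ) + 1) ^ (n * (k + m))))
      atTop (nhds 1) := by
  refine (Matrix.tendsto_card_solvableSystems_div (μ := Fin m)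
    (Fin.castLE_injective hnk)).congr fun r ↦ ?_
  simp only [Fintype.card_fin]
  rw [← Set.ncard_coe_finset]
  congr
  ext p
  simp [Matrix.solvableSystems, Matrix.mem_integerBox, and_comm]

/-- For `m ≥ 1` and `1 ≤ n ≤ k`, the set `SAT_{Q^m}(Z^m, k, n)` of systems
of `n` equations in `k` variables over `Z^m` that are solvable in `Q^m` is generic:
its asymptotic density with respect to the ball stratification of `Z^{n(k+m)}` equals 1. -/
theorem satQ_generic_of_le (m n k : ℕ) (hm : 1 ≤ m) (hn : 1 ≤ n) (hnk : n ≤ k) :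
    Tendsto (fun r : ℕ =>
      ((Set.ncard {p : Matrix (Fin n) (Fin k) ℤ × Matrix (Fin n) (Fin m) ℤ |
          (∃ X : Matrix (Fin k) (Fin m) ℚ,
            p.1.map ((↑) : ℤ → ℚ) * X = p.2.map ((↑) : ℤ → ℚ)) ∧
          (∀ i j, |p.1 i j| ≤ (r : ℤ)) ∧ (∀ i j, |p.2 i j| ≤ (r : ℤ))} : ℝ) /
        (2 * (r : ℝ) + 1) ^ (n * (k + m))))
      atTop (nhds 1) :=
  satQ_generic_of_le_general m n k hnk
end

section
/- For integers m ≥ 1 and n > k ≥ 1, the set SAT_{Q^m}(Z^m, k, n) of systems of n equations in k variables over Z^m that are solvable in Q^m is negligible: its asymptotic density with respect to the ball stratification of Z^{n(k+m)} equals 0. -/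
open Filter Matrix

/-!
Since `n > k`, every `A ∈ ℤ^{n×k}` has a nonzero rational left kernel vector `v`, and
`AX = B` forces `vᵀB = 0`. Choosing a row `i₀` with `v i₀ ≠ 0`, the matrix `B` is then
determined by `A` and its other `n - 1` rows. So at most `(2r+1)^{nk + (n-1)m}` of the
`(2r+1)^{n(k+m)}` systems in the ball of radius `r` are solvable, a proportion of at most
`(2r+1)^{-m} → 0`.
-/

theorem Matrix.exists_ne_zero_vecMul_eq_zero {ι κ K : Type*} [Fintype ι] [Fintype κ] [Field K]
    (A : Matrix ι κ K) (h : Fintype.card κ < Fintype.card ι) : ∃ v ≠ 0, v ᵥ* A = 0 := by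
  have hker : LinearMap.ker A.vecMulLinear ≠ ⊥ :=
    LinearMap.ker_ne_bot_of_finrank_lt (by simpa using h)
  obtain ⟨v, hv, hv0⟩ := (Submodule.ne_bot_iff _).mp hker
  exact ⟨v, hv0, hv⟩

theorem Matrix.eq_of_vecMul_eq_of_forall_ne {ι κ R : Type*} [Fintype ι] [CommRing R]
    [NoZeroDivisors R] {v : ι → R} {i₀ : ι} (hv : v i₀ ≠ 0) {B B' : Matrix ι κ R}
    (h : v ᵥ* B = v ᵥ* B') (hrows : ∀ i ≠ i₀, B i = B' i) : B = B' := by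
  ext i j
  by_cases hi : i = i₀
  · subst hi
    have hsum : v i * (B i j - B' i j) = 0 := by
      rw [← Finset.sum_eq_single_of_mem (f := fun l => v l * (B l j - B' l j)) i
        (Finset.mem_univ _) fun l _ hl => by simp [hrows l hl]]
      simpa [vecMul, dotProduct, mul_sub, sub_eq_zero] using congrFun h j
    simpa [hv, sub_eq_zero] using hsum
  · rw [hrows i hi]

theorem Matrix.vecMul_eq_zero_of_mul_eq {ι κ μ R : Type*} [Fintype ι] [Fintype κ]
    [CommSemiring R] {v : ι → R} {A : Matrix ι κ R} {X : Matrix κ μ R} {B : Matrix ι μ R}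
    (hv : v ᵥ* A = 0) (hX : A * X = B) : v ᵥ* B = 0 := by
  rw [← hX, ← vecMul_vecMul, hv, zero_vecMul]

def intBall (ι κ : Type*) (r : ℕ) : Set (ι → κ → ℤ) := {A | ∀ i j, |A i j| ≤ (r : ℤ)}

section intBall

variable {ι κ : Type*} [Fintype ι] [Fintype κ] (r : ℕ)

theorem intBall_eq_Icc [DecidableEq ι] [DecidableEq κ] :
    intBall ι κ r =
      ↑(Finset.Icc (fun _ _ => -(r : ℤ)) (fun _ _ => (r : ℤ)) : Finset (ι → κ → ℤ)) := by
  ext A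
  simp [intBall, Pi.le_def, abs_le, forall_and]

theorem finite_intBall : (intBall ι κ r).Finite := by
  classical
  rw [intBall_eq_Icc]
  exact Finset.finite_toSet _

theorem ncard_intBall :
    (intBall ι κ r).ncard = (2 * r + 1) ^ (Fintype.card ι * Fintype.card κ) := by
  classical
  rw [intBall_eq_Icc, Set.ncard_coe_finset]
  simp only [Pi.card_Icc, Int.card_Icc, Finset.prod_const, Finset.card_univ, ← pow_mul]
  congr 1
  · omega
  · ring

end intBall

def SolvableOverRat {ι κ μ : Type*} [Fintype κ] (A : Matrix ι κ ℤ) (B : Matrix ι μ ℤ) : Prop :=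
  ∃ X : Matrix κ μ ℚ, A.map ((↑) : ℤ → ℚ) * X = B.map ((↑) : ℤ → ℚ)

theorem ncard_solvableOverRat_le {n k m : ℕ} (hk : k ≤ n) (r : ℕ) :
    {p : Matrix (Fin (n + 1)) (Fin k) ℤ × Matrix (Fin (n + 1)) (Fin m) ℤ |
      SolvableOverRat p.1 p.2 ∧ p.1 ∈ intBall _ _ r ∧ p.2 ∈ intBall _ _ r}.ncard ≤
    (2 * r + 1) ^ ((n + 1) * k + n * m) := by
  choose v hv0 hvA using fun A : Matrix (Fin (n + 1)) (Fin k) ℤ =>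
    (A.map ((↑) : ℤ → ℚ)).exists_ne_zero_vecMul_eq_zero (by simpa using Nat.lt_succ_of_le hk)
  choose i₀ hi₀ using fun A => Function.ne_iff.mp (hv0 A)
  let dropRow (p : Matrix (Fin (n + 1)) (Fin k) ℤ × Matrix (Fin (n + 1)) (Fin m) ℤ) :
      (Fin (n + 1) → Fin k → ℤ) × (Fin n → Fin m → ℤ) :=
    (p.1, fun i => p.2 ((i₀ p.1).succAbove i))
  calc _ ≤ (intBall (Fin (n + 1)) (Fin k) r ×ˢ intBall (Fin n) (Fin m) r).ncard := by
        refine Set.ncard_le_ncard_of_injOn dropRow ?_ ?_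
          ((finite_intBall r).prod (finite_intBall r))
        · rintro p ⟨-, hA, hB⟩
          exact ⟨hA, fun i j => hB _ j⟩
        · rintro ⟨A, B⟩ ⟨⟨X, hX⟩, -⟩ ⟨A', B'⟩ ⟨⟨X', hX'⟩, -⟩ h
          obtain rfl : A = A' := congrArg Prod.fst h
          have hrows := congrArg Prod.snd h
          refine Prod.ext rfl (Matrix.map_injective Int.cast_injective
            (eq_of_vecMul_eq_of_forall_ne (hi₀ A) ?_ fun i hi => ?_))
          · rw [vecMul_eq_zero_of_mul_eq (hvA A) hX, vecMul_eq_zero_of_mul_eq (hvA A) hX']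
          · obtain ⟨i, rfl⟩ := Fin.exists_succAbove_eq hi
            ext j
            simpa using congrFun (congrFun hrows i) j
    _ = _ := by
        rw [Set.ncard_prod, ncard_intBall, ncard_intBall]
        simp [pow_add]

theorem satQ_negligible_of_gt_general (m n k : ℕ) (hm : 1 ≤ m) (hnk : k < n) :
    Tendsto (fun r : ℕ =>
      ((Set.ncard {p : Matrix (Fin n) (Fin k) ℤ × Matrix (Fin n) (Fin m) ℤ |
          (∃ X : Matrix (Fin k) (Fin m) ℚ,
            p.1.map ((↑) : ℤ → ℚ) * X = p.2.map ((↑) : ℤ → ℚ)) ∧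
          (∀ i j, |p.1 i j| ≤ (r : ℤ)) ∧ (∀ i j, |p.2 i j| ≤ (r : ℤ))} : ℝ) /
        (2 * (r : ℝ) + 1) ^ (n * (k + m))))
      atTop (nhds 0) := by
  obtain ⟨n, rfl⟩ := Nat.exists_eq_add_one_of_ne_zero (by omega : n ≠ 0)
  have hbase : Tendsto (fun r : ℕ => 2 * (r : ℝ) + 1) atTop atTop :=
    tendsto_atTop_add_const_right _ 1 (tendsto_natCast_atTop_atTop.const_mul_atTop two_pos)
  have hdecay : Tendsto (fun r : ℕ => 1 / (2 * (r : ℝ) + 1) ^ m) atTop (nhds 0) := by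
    simpa only [one_div, Function.comp_def] using
      tendsto_inv_atTop_zero.comp ((tendsto_pow_atTop (by omega)).comp hbase)
  refine squeeze_zero (fun r => by positivity) (fun r => ?_) hdecay
  rw [div_le_div_iff₀ (by positivity) (by positivity), one_mul]
  calc _ ≤ (((2 * r + 1) ^ ((n + 1) * k + n * m) : ℕ) : ℝ) * (2 * r + 1) ^ m := by
        gcongr
        exact ncard_solvableOverRat_le (by omega) r
    _ = _ := by push_cast; ring

/-- For `m ≥ 1` and `n > k ≥ 1`, the set `SAT_{Q^m}(Z^m, k, n)` of systems
of `n` equations in `k` variables over `Z^m` that are solvable in `Q^m` is negligible: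
its asymptotic density with respect to the ball stratification of `Z^{n(k+m)}` equals 0. -/
theorem satQ_negligible_of_gt (m n k : ℕ) (hm : 1 ≤ m) (hk : 1 ≤ k) (hnk : k < n) :
    Tendsto (fun r : ℕ =>
      ((Set.ncard {p : Matrix (Fin n) (Fin k) ℤ × Matrix (Fin n) (Fin m) ℤ |
          (∃ X : Matrix (Fin k) (Fin m) ℚ,
            p.1.map ((↑) : ℤ → ℚ) * X = p.2.map ((↑) : ℤ → ℚ)) ∧
          (∀ i j, |p.1 i j| ≤ (r : ℤ)) ∧ (∀ i j, |p.2 i j| ≤ (r : ℤ))} : ℝ) /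
        (2 * (r : ℝ) + 1) ^ (n * (k + m))))
      atTop (nhds 0) :=
  satQ_negligible_of_gt_general m n k hm hnk
end

section
/- For integers m ≥ 1 and n > k ≥ 1, the set SAT(Z^m, k, n) of systems of n equations in k variables over Z^m that are solvable in Z^m is negligible: its asymptotic density with respect to the ball stratification of Z^{n(k+m)} equals 0. -/
/-!
As `n > k`, the rows of `A` satisfy a nontrivial integer relation `c ᵥ* A = 0`, which every
solvable right-hand side `B = A * X` inherits: `c ᵥ* B = 0`. Choosing `i₀` with `c i₀ ≠ 0`, the
rows of `B` other than `i₀` determine row `i₀`. Hence the solvable systems of height at most `r`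
number at most `(2r+1)^(nk + (n-1)m)`, a proportion `(2r+1)^(-m)` of all systems.
-/

open Filter

namespace Matrix

variable {ι κ μ R : Type*} [Fintype ι] [Fintype κ]

theorem exists_vecMul_eq_zero_of_card_lt [Ring R] [StrongRankCondition R]
    (A : Matrix ι κ R) (h : Fintype.card κ < Fintype.card ι) :
    ∃ c : ι → R, ∃ i, c i ≠ 0 ∧ c ᵥ* A = 0 := by
  have hA : ¬ LinearIndependent R A := fun hA => by
    have := hA.fintype_card_le_finrank
    rw [Module.finrank_fintype_fun_eq_card] at this
    omega
  obtain ⟨c, hc, i, hi⟩ := Fintype.not_linearIndependent_iff.mp hA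
  exact ⟨c, i, hi, by rw [← hc]; ext j; simp [vecMul, dotProduct, Finset.sum_apply]⟩

theorem eq_of_vecMul_eq_of_forall_ne_s2 [Ring R] [NoZeroDivisors R]
    {c : ι → R} {i : ι} (hi : c i ≠ 0) {B B' : Matrix ι μ R} (hcB : c ᵥ* B = c ᵥ* B')
    (hBB' : ∀ i' ≠ i, B i' = B' i') : B = B' := by
  have hrow : ∀ j, c i * (B i j - B' i j) = 0 := fun j => by
    have := congrFun (vecMul_sub B B' c ▸ sub_eq_zero.mpr hcB) j
    rwa [vecMul, dotProduct, Finset.sum_eq_single i (fun i' _ hi' => by simp [hBB' i' hi'])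
      (by simp)] at this
  ext i' j
  by_cases h : i' = i
  · subst h; exact sub_eq_zero.mp ((mul_eq_zero.mp (hrow j)).resolve_left hi)
  · rw [hBB' i' h]

variable [DecidableEq ι] [DecidableEq κ]

variable (ι κ) in
noncomputable def intBox (r : ℕ) : Finset (Matrix ι κ ℤ) :=
  (Fintype.piFinset fun _ => Fintype.piFinset fun _ => Finset.Icc (-(r : ℤ)) r).map
    of.toEmbedding

theorem mem_intBox {r : ℕ} {M : Matrix ι κ ℤ} : M ∈ intBox ι κ r ↔ ∀ i j, |M i j| ≤ r := by
  simp [intBox, abs_le]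

theorem card_intBox (r : ℕ) :
    (intBox ι κ r).card = (2 * r + 1) ^ (Fintype.card ι * Fintype.card κ) := by
  simp only [intBox, Finset.card_map, Fintype.card_piFinset, Int.card_Icc, Finset.prod_const,
    Finset.card_univ]
  rw [pow_mul']
  congr 2
  omega

end Matrix

open Matrix in
theorem ncard_solvable_le (n k m r : ℕ) (hnk : k < n + 1) :
    {p : Matrix (Fin (n + 1)) (Fin k) ℤ × Matrix (Fin (n + 1)) (Fin m) ℤ |
      (∃ X : Matrix (Fin k) (Fin m) ℤ, p.1 * X = p.2) ∧
      (∀ i j, |p.1 i j| ≤ (r : ℤ)) ∧ (∀ i j, |p.2 i j| ≤ (r : ℤ))}.ncard ≤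
      (2 * r + 1) ^ ((n + 1) * k) * (2 * r + 1) ^ (n * m) := by
  choose c i₀ hc₀ hcA using fun A : Matrix (Fin (n + 1)) (Fin k) ℤ =>
    exists_vecMul_eq_zero_of_card_lt A (by simpa using hnk)
  let f (p : Matrix (Fin (n + 1)) (Fin k) ℤ × Matrix (Fin (n + 1)) (Fin m) ℤ) :
      Matrix (Fin (n + 1)) (Fin k) ℤ × Matrix (Fin n) (Fin m) ℤ :=
    (p.1, of fun i => p.2 ((i₀ p.1).succAbove i))
  refine (Set.ncard_le_ncard_of_injOn f ?_ ?_
    (Finset.finite_toSet (intBox (Fin (n + 1)) (Fin k) r ×ˢ intBox (Fin n) (Fin m) r))).trans ?_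
  · rintro ⟨A, B⟩ ⟨-, hA, hB⟩
    simp only [Finset.coe_product, Set.mem_prod, Finset.mem_coe, mem_intBox, f]
    exact ⟨hA, fun i => hB _⟩
  · rintro ⟨A, B⟩ ⟨⟨X, hX : A * X = B⟩, -⟩ ⟨A', B'⟩ ⟨⟨X', hX' : A' * X' = B'⟩, -⟩ hpq
    simp only [f, Prod.mk.injEq] at hpq
    obtain ⟨rfl, hrows⟩ := hpq
    congr 1
    refine eq_of_vecMul_eq_of_forall_ne_s2 (hc₀ A) ?_ fun i hi => ?_
    · rw [← hX, ← hX', ← vecMul_vecMul, ← vecMul_vecMul, hcA, zero_vecMul, zero_vecMul]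
    · obtain ⟨j, rfl⟩ := Fin.exists_succAbove_eq hi
      exact congrFun hrows j
  · simp [Set.ncard_coe_finset, card_intBox]

theorem sat_negligible_of_gt_general (m n k : ℕ) (hm : 1 ≤ m) (hnk : k < n) :
    Tendsto (fun r : ℕ =>
      ((Set.ncard {p : Matrix (Fin n) (Fin k) ℤ × Matrix (Fin n) (Fin m) ℤ |
          (∃ X : Matrix (Fin k) (Fin m) ℤ, p.1 * X = p.2) ∧
          (∀ i j, |p.1 i j| ≤ (r : ℤ)) ∧ (∀ i j, |p.2 i j| ≤ (r : ℤ))} : ℝ) /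
        (2 * (r : ℝ) + 1) ^ (n * (k + m))))
      atTop (nhds 0) := by
  obtain ⟨n, rfl⟩ : ∃ n', n = n' + 1 := ⟨n - 1, by omega⟩
  have hside : Tendsto (fun r : ℕ => 2 * (r : ℝ) + 1) atTop atTop :=
    tendsto_atTop_add_const_right _ 1 (tendsto_natCast_atTop_atTop.const_mul_atTop two_pos)
  refine squeeze_zero (fun r => by positivity) (fun r => ?_)
    (tendsto_inv_atTop_zero.comp ((tendsto_pow_atTop (n := m) (by omega)).comp hside))
  have hcount : (_ : ℝ) ≤ _ := Nat.cast_le.mpr (ncard_solvable_le n k m r hnk)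
  rw [div_le_iff₀ (by positivity), Function.comp_apply, Function.comp_apply, ← div_eq_inv_mul,
    le_div_iff₀ (by positivity)]
  calc _ ≤ (2 * (r : ℝ) + 1) ^ ((n + 1) * k) * (2 * (r : ℝ) + 1) ^ (n * m) * _ := by
        gcongr; exact_mod_cast hcount
    _ = _ := by rw [← pow_add, ← pow_add]; congr 1; ring

/-- For `m ≥ 1` and `n > k ≥ 1`, the set `SAT(Z^m, k, n)` of systems
of `n` equations in `k` variables over `Z^m` that are solvable in `Z^m` is negligible:
its asymptotic density with respect to the ball stratification of `Z^{n(k+m)}` equals 0. -/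
theorem sat_negligible_of_gt (m n k : ℕ) (hm : 1 ≤ m) (hk : 1 ≤ k) (hnk : k < n) :
    Tendsto (fun r : ℕ =>
      ((Set.ncard {p : Matrix (Fin n) (Fin k) ℤ × Matrix (Fin n) (Fin m) ℤ |
          (∃ X : Matrix (Fin k) (Fin m) ℤ, p.1 * X = p.2) ∧
          (∀ i j, |p.1 i j| ≤ (r : ℤ)) ∧ (∀ i j, |p.2 i j| ≤ (r : ℤ))} : ℝ) /
        (2 * (r : ℝ) + 1) ^ (n * (k + m))))
      atTop (nhds 0) :=
  sat_negligible_of_gt_general m n k hm hnk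
end

section
/- Let d ≥ 1 and 0 ≤ i ≤ d. For every r with 0 ≤ r ≤ d, the absolute value of the coefficient of t^r in the degree-d polynomial C(t+d−i, d) = (t+d−i)(t+d−i−1)⋯(t−i+1)/d! is at most the coefficient of t^r in the polynomial C(t+d, d) = (t+d)(t+d−1)⋯(t+1)/d! (all coefficients of the latter polynomial are nonnegative). -/
/-!
The roots of `∏_{l<d} (t + a - l)` are `l - a`, and for `-1 ≤ a ≤ d` their absolute values can be
matched one by one with `1, …, d`, the roots (up to sign) of `∏_{l<d} (t + d - l)`. Multiplying
by `t + c` is coefficientwise monotone in `|c|`, so products whose constant terms are dominated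
factor by factor have dominated coefficients. The matching is built by induction on `d`: for
`a ≥ 0` split off the factor `t + a`, for `a < 0` the factor `t + a - d`.
-/

open Polynomial Finset

variable {R : Type*} [CommRing R] [LinearOrder R] [IsStrictOrderedRing R]

namespace Polynomial

lemma abs_coeff_mul_X_le {p q : R[X]} (h : ∀ n, |p.coeff n| ≤ q.coeff n) (n : ℕ) :
    |(p * X).coeff n| ≤ (q * X).coeff n := by
  cases n with
  | zero => simp only [coeff_mul_X_zero, abs_zero, le_refl]
  | succ n => simpa only [coeff_mul_X] using h n

lemma abs_coeff_mul_X_add_C_le {p q : R[X]} {a b : R} (hab : |a| ≤ b)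
    (h : ∀ n, |p.coeff n| ≤ q.coeff n) (n : ℕ) :
    |(p * (X + C a)).coeff n| ≤ (q * (X + C b)).coeff n := by
  simp only [mul_add, coeff_add, coeff_mul_C]
  calc |(p * X).coeff n + p.coeff n * a|
      ≤ |(p * X).coeff n| + |p.coeff n| * |a| := by rw [← abs_mul]; exact abs_add_le _ _
    _ ≤ (q * X).coeff n + q.coeff n * b :=
      add_le_add (abs_coeff_mul_X_le h n)
        (mul_le_mul (h n) hab (abs_nonneg a) ((abs_nonneg _).trans (h n)))

lemma abs_coeff_prod_X_add_C_sub_le {a : R} (d : ℕ) (ha : -1 ≤ a) (had : a ≤ d) (n : ℕ) :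
    |(∏ l ∈ range d, (X + C (a - l))).coeff n| ≤ (∏ l ∈ range d, (X + C ((d : R) - l))).coeff n := by
  induction d generalizing a n with
  | zero => simp only [range_zero, prod_empty, coeff_one]; split_ifs <;> simp
  | succ d ih =>
    have hQ : ∏ l ∈ range (d + 1), (X + C (((d + 1 : ℕ) : R) - l)) =
        (∏ l ∈ range d, (X + C ((d : R) - l))) * (X + C ((d : R) + 1)) := by
      rw [prod_range_succ']
      push_cast
      simp only [add_sub_add_right_eq_sub, sub_zero]
    rw [hQ]
    push_cast at had
    by_cases ha0 : 0 ≤ a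
    · rw [prod_range_succ']
      push_cast
      simp only [sub_zero, sub_add_eq_sub_sub_swap]
      refine abs_coeff_mul_X_add_C_le ?_ (ih (by linarith) (by linarith)) n
      rwa [abs_of_nonneg ha0]
    · rw [prod_range_succ]
      refine abs_coeff_mul_X_add_C_le ?_ (ih ha (by linarith)) n
      rw [abs_of_nonpos (by linarith)]; linarith

end Polynomial

theorem abs_coeff_binomial_shift_le_general (d i : ℕ) (hi : i ≤ d)
    (r : ℕ) :
    |(Polynomial.C ((d.factorial : ℚ))⁻¹ *
        ∏ l ∈ Finset.range d, (Polynomial.X + Polynomial.C ((d : ℚ) - i - l))).coeff r|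
      ≤ (Polynomial.C ((d.factorial : ℚ))⁻¹ *
        ∏ l ∈ Finset.range d, (Polynomial.X + Polynomial.C ((d : ℚ) - l))).coeff r := by
  have hfac : (0 : ℚ) ≤ (d.factorial : ℚ)⁻¹ := by positivity
  have hid : (i : ℚ) ≤ d := by exact_mod_cast hi
  rw [coeff_C_mul, coeff_C_mul, abs_mul, abs_of_nonneg hfac]
  exact mul_le_mul_of_nonneg_left
    (abs_coeff_prod_X_add_C_sub_le d (by linarith) (sub_le_self _ i.cast_nonneg) r) hfac

/-- For `d ≥ 1` and `0 ≤ i ≤ d`, and every `0 ≤ r ≤ d`, the absolute value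
of the coefficient of `t^r` in the polynomial `C(t+d−i, d) = ∏_{l<d} (t+d−i−l) / d!`
is at most the coefficient of `t^r` in `C(t+d, d) = ∏_{l<d} (t+d−l) / d!`. -/
theorem abs_coeff_binomial_shift_le (d i : ℕ) (hd : 1 ≤ d) (hi : i ≤ d)
    (r : ℕ) (hr : r ≤ d) :
    |(Polynomial.C ((d.factorial : ℚ))⁻¹ *
        ∏ l ∈ Finset.range d, (Polynomial.X + Polynomial.C ((d : ℚ) - i - l))).coeff r|
      ≤ (Polynomial.C ((d.factorial : ℚ))⁻¹ *
        ∏ l ∈ Finset.range d, (Polynomial.X + Polynomial.C ((d : ℚ) - l))).coeff r :=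
  abs_coeff_binomial_shift_le_general d i hi r
end

section
/- Let d ≥ 1, p ≥ 1 be integers and h_0, …, h_{(d+1)p−1} nonnegative integers. For each j ∈ {0, …, p−1} let f_j(t) = Σ_{i=0}^{d} h_{ip+j} C(t+d−i, d), and write f_j(t) = Σ_{r=0}^{d} c_r(j) t^r. Suppose the leading coefficient is the same for all residues: c_d(j) = c_d for all j (as holds for the constituents of an Ehrhart quasipolynomial, where c_d = vol(P)). Then for every j ∈ {0, …, p−1} and every r with 1 ≤ r ≤ d−1: |c_r(j)| ≤ |s(d+1, r+1)| · c_d. In particular, if P is a rational convex d-polytope with denominator p whose Ehrhart series equals (Σ_{i} h_i z^i)/(1−z^p)^{d+1} with h_i ∈ N, then the coefficients of its Ehrhart quasipolynomial L_P(t) = c_d t^d + c_{d−1}(t) t^{d−1} + ⋯ + c_1(t) t + 1 satisfy |c_r(t)| ≤ |s(d+1, r+1)| c_d for r = 1, …, d−1 and all t ∈ Z^+. -/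
/-!
Write `P_i = ∏_{l<d} (X + (d - i - l))`, so that `f_j = Σ_i (h_{ip+j} / d!) P_i`. Each `P_i` is
monic of degree `d`, hence `c_d = Σ_i h_{ip+j} / d!` and `f_j` is a nonnegative combination of the
`P_i` with total weight `c_d`; it suffices to bound `|coeff_r P_i|` uniformly in `i`.
The roots of `P_i` are the integers `i - d, …, i - 1`, and their absolute values are dominated
termwise by a permutation of `1, …, d`. Since the coefficients of `∏ (X + a_l)` are elementary
symmetric functions of the `a_l`, this gives
`|coeff_r P_i| ≤ coeff_r ∏_{l<d} (X + l + 1) = coeff_{r+1} ∏_{l≤d} (X + l) = |s(d+1, r+1)|`.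
-/

open Polynomial Finset

namespace Polynomial

section Semiring

variable {R : Type*} [Semiring R]

theorem coeff_X_add_C_mul_succ (a : R) (q : R[X]) (k : ℕ) :
    ((X + C a) * q).coeff (k + 1) = q.coeff k + a * q.coeff (k + 1) := by
  simp [add_mul, coeff_X_mul]

end Semiring

section CommRing

variable {R : Type*} [CommRing R] {ι : Type*}

theorem coeff_prod_X_sub_C (s : Finset ι) (a : ι → R) (k : ℕ) :
    (∏ i ∈ s, (X - C (a i))).coeff k = (-1) ^ (#s + k) * (∏ i ∈ s, (X + C (a i))).coeff k := by
  classical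
  induction s using Finset.induction_on generalizing k with
  | empty => simp only [prod_empty, card_empty, zero_add, coeff_one]; split_ifs <;> simp_all
  | insert i s hi ih =>
    rw [prod_insert hi, prod_insert hi, card_insert_of_notMem hi]
    cases k with
    | zero => simp [mul_coeff_zero, ih, pow_succ]; ring
    | succ k => rw [coeff_X_sub_C_mul, coeff_X_add_C_mul_succ, ih, ih]; ring

theorem coeff_succ_prod_range_succ_X_add_C (n k : ℕ) :
    (∏ l ∈ range (n + 1), (X + C (l : R))).coeff (k + 1) =
      (∏ l ∈ range n, (X + C ((l : R) + 1))).coeff k := by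
  simp [prod_range_succ', coeff_mul_X]

theorem coeff_card_prod_X_add_C (s : Finset ι) (a : ι → R) :
    (∏ i ∈ s, (X + C (a i))).coeff #s = 1 := by
  simp [prod_X_add_C_coeff s a le_rfl]

end CommRing

section OrderedRing

variable {R : Type*} [CommRing R] [LinearOrder R] [IsStrictOrderedRing R] {ι : Type*}

theorem abs_coeff_prod_X_add_C_le (s : Finset ι) {a b : ι → R} (hab : ∀ i ∈ s, |a i| ≤ b i)
    (k : ℕ) : |(∏ i ∈ s, (X + C (a i))).coeff k| ≤ (∏ i ∈ s, (X + C (b i))).coeff k := by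
  classical
  induction s using Finset.induction_on generalizing k with
  | empty => simp only [prod_empty, coeff_one]; split_ifs <;> simp
  | insert i s hi ih =>
    have hs := ih fun j hj => hab j (mem_insert_of_mem hj)
    have hbi : |a i| ≤ b i := hab i (mem_insert_self i s)
    have hmul : ∀ k, |a i| * |(∏ i ∈ s, (X + C (a i))).coeff k| ≤
        b i * (∏ i ∈ s, (X + C (b i))).coeff k :=
      fun k => mul_le_mul hbi (hs k) (abs_nonneg _) ((abs_nonneg _).trans hbi)
    rw [prod_insert hi, prod_insert hi]
    cases k with
    | zero =>
      simpa only [mul_coeff_zero, coeff_add, coeff_X_zero, coeff_C_zero, zero_add, abs_mul]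
        using hmul 0
    | succ k =>
      rw [coeff_X_add_C_mul_succ, coeff_X_add_C_mul_succ]
      exact (abs_add_le _ _).trans (by rw [abs_mul]; exact add_le_add (hs k) (hmul (k + 1)))

theorem abs_coeff_sum_C_mul_le {s : Finset ι} {w : ι → R} {P : ι → R[X]} {n k : ℕ} {B : R}
    (hw : ∀ i ∈ s, 0 ≤ w i) (hn : ∀ i ∈ s, (P i).coeff n = 1)
    (hB : ∀ i ∈ s, |(P i).coeff k| ≤ B) :
    |(∑ i ∈ s, C (w i) * P i).coeff k| ≤ B * (∑ i ∈ s, C (w i) * P i).coeff n := by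
  simp only [finsetSum_coeff, coeff_C_mul, mul_sum]
  refine (abs_sum_le_sum_abs _ _).trans (sum_le_sum fun i hi => ?_)
  rw [abs_mul, abs_of_nonneg (hw i hi), hn i hi, mul_one, mul_comm]
  exact mul_le_mul_of_nonneg_right (hB i hi) (hw i hi)

theorem abs_coeff_prod_range_X_add_C_sub_sub_le {d i : ℕ} (hi : i ≤ d) (k : ℕ) :
    |(∏ l ∈ range d, (X + C ((d : R) - i - l))).coeff k| ≤
      (∏ l ∈ range d, (X + C ((l : R) + 1))).coeff k := by
  -- `σ` is a permutation of `range d` with `|d - i - l| ≤ σ l + 1`.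
  set σ : ℕ → ℕ := fun l => if l + i < d then d - 1 - l else l + i - d with hσ
  have hperm : ∏ l ∈ range d, (X + C ((σ l : R) + 1)) = ∏ l ∈ range d, (X + C ((l : R) + 1)) :=
    prod_nbij' σ (fun m => if i ≤ m then d - 1 - m else m + d - i)
      (fun l hl => by simp only [hσ, mem_range] at hl ⊢; split_ifs <;> omega)
      (fun m hm => by simp only [mem_range] at hm ⊢; split_ifs <;> omega)
      (fun l hl => by simp only [hσ, mem_range] at hl ⊢; split_ifs <;> omega)
      (fun m hm => by simp only [hσ, mem_range] at hm ⊢; split_ifs <;> omega)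
      (fun _ _ => rfl)
  rw [← hperm]
  refine abs_coeff_prod_X_add_C_le _ (fun l _ => ?_) k
  have hZ : |(d : ℤ) - i - l| ≤ (σ l : ℤ) + 1 := by
    rw [abs_le]; simp only [hσ]; split_ifs <;> omega
  exact_mod_cast (Int.cast_le (R := R)).mpr hZ

theorem abs_coeff_prod_range_X_add_C_sub_sub_le_abs_coeff_succ {d i : ℕ} (hi : i ≤ d) (k : ℕ) :
    |(∏ l ∈ range d, (X + C ((d : R) - i - l))).coeff k| ≤
      |(∏ l ∈ range (d + 1), (X - C (l : R))).coeff (k + 1)| := by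
  have hbound : |(∏ l ∈ range d, (X + C ((d : R) - i - l))).coeff k| ≤
      (∏ l ∈ range (d + 1), (X + C (l : R))).coeff (k + 1) :=
    (abs_coeff_prod_range_X_add_C_sub_sub_le hi k).trans_eq
      (coeff_succ_prod_range_succ_X_add_C d k).symm
  rw [coeff_prod_X_sub_C, abs_mul, abs_pow, abs_neg, abs_one, one_pow, one_mul]
  exact hbound.trans (le_abs_self _)

end OrderedRing

end Polynomial

theorem ehrhart_coeff_bound_general (d p : ℕ) (h : ℕ → ℕ)
    (f : ℕ → Polynomial ℚ)
    (hf : ∀ j, f j = ∑ i ∈ Finset.range (d + 1),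
      Polynomial.C ((h (i * p + j) : ℚ)) *
        (Polynomial.C ((d.factorial : ℚ))⁻¹ *
          ∏ l ∈ Finset.range d, (Polynomial.X + Polynomial.C ((d : ℚ) - i - l))))
    (cd : ℚ) (hlead : ∀ j < p, (f j).coeff d = cd) :
    ∀ j < p, ∀ r, 1 ≤ r → r ≤ d - 1 →
      |(f j).coeff r| ≤
        |(∏ l ∈ Finset.range (d + 1), (Polynomial.X - Polynomial.C ((l : ℚ)))).coeff (r + 1)|
          * cd := by
  intro j hj r _ _
  have hfj : f j = ∑ i ∈ range (d + 1), C ((h (i * p + j) : ℚ) * (d.factorial : ℚ)⁻¹) *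
      ∏ l ∈ range d, (X + C ((d : ℚ) - i - l)) := by
    simp only [hf j, C_mul, mul_assoc]
  rw [← hlead j hj, hfj]
  refine abs_coeff_sum_C_mul_le (fun i _ => by positivity) (fun i _ => ?_) (fun i hi => ?_)
  · simpa using coeff_card_prod_X_add_C (range d) fun l => (d : ℚ) - i - l
  · exact abs_coeff_prod_range_X_add_C_sub_sub_le_abs_coeff_succ
      (Nat.lt_succ_iff.mp (mem_range.mp hi)) r

/-- Let `d, p ≥ 1` and `h_0, …, h_{(d+1)p−1}` nonnegative integers.
For `j ∈ {0,…,p−1}`, let `f_j(t) = Σ_{i=0}^{d} h_{ip+j} C(t+d−i, d)` with coefficients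
`c_r(j)`. If the leading coefficient `c_d(j) = c_d` is the same for all residues `j`
(as for the constituents of an Ehrhart quasipolynomial, where `c_d = vol(P)`), then
`|c_r(j)| ≤ |s(d+1, r+1)| · c_d` for all `j < p` and `1 ≤ r ≤ d−1`, where
`s(d+1, r+1)` is the Stirling number of the first kind, i.e. the coefficient of
`x^{r+1}` in `x(x−1)⋯(x−d)`. -/
theorem ehrhart_coeff_bound (d p : ℕ) (hd : 1 ≤ d) (hp : 1 ≤ p) (h : ℕ → ℕ)
    (f : ℕ → Polynomial ℚ)
    (hf : ∀ j, f j = ∑ i ∈ Finset.range (d + 1),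
      Polynomial.C ((h (i * p + j) : ℚ)) *
        (Polynomial.C ((d.factorial : ℚ))⁻¹ *
          ∏ l ∈ Finset.range d, (Polynomial.X + Polynomial.C ((d : ℚ) - i - l))))
    (cd : ℚ) (hlead : ∀ j < p, (f j).coeff d = cd) :
    ∀ j < p, ∀ r, 1 ≤ r → r ≤ d - 1 →
      |(f j).coeff r| ≤
        |(∏ l ∈ Finset.range (d + 1), (Polynomial.X - Polynomial.C ((l : ℚ)))).coeff (r + 1)|
          * cd :=
  ehrhart_coeff_bound_general d p h f hf cd hlead
end
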